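/- arXiv:2501.15750 — 2 statements merged into one kernel-verified Lean document; each statement's English description precedes it below -/
import Mathlib

section
/- Let A be a commutative unital complex Banach algebra, let φ be a nonzero complex homomorphism on A, set M = ker φ, and let m ∈ ℕ. Suppose that the quotient M/cl(M²) has complex dimension at most 1. Then there is a nondegenerate bounded point derivation of order m at φ on A if and only if cl(M^m) ≠ cl(M^{m+1}), in which case M ⊋ cl(M²) ⊋ ⋯ ⊋ cl(M^m) ⊋ cl(M^{m+1}). -/
open scoped ENNReal
open Metric Set

noncomputable section

/-- The topological closure of the `m`-th power of an ideal, viewed as a complex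
submodule. -/
def clPow {A : Type*} [NormedCommRing A] [NormedAlgebra ℂ A]
    (I : Ideal A) (m : ℕ) : Submodule ℂ A :=
  ((I ^ m).restrictScalars ℂ).topologicalClosure

/-- There is a nondegenerate bounded point derivation of order `m` at the complex
homomorphism `φ` on `A`. -/
def HasNBPDAlg {A : Type*} [NormedCommRing A] [NormedAlgebra ℂ A]
    (φ : A →ₐ[ℂ] ℂ) (m : ℕ) : Prop :=
  ∃ d : ℕ → (A →ₗ[ℂ] ℂ),
    d 0 = φ.toLinearMap ∧
    (∀ k, 1 ≤ k → k ≤ m → ∀ f g : A,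
      d k (f * g) = ∑ j ∈ Finset.range (k + 1), d j f * d (k - j) g) ∧
    (∀ k ≤ m, Continuous (d k)) ∧
    d 1 ≠ 0

/-!
Let `x ∈ M`. A continuous point derivation `d` of order `m` kills `cl(M^{k+1})` in degree `k`,
and if `d₁ x = 1` then `dₖ(xᵏ) = 1`; so `xᵏ ∈ cl(Mᵏ) \ cl(M^{k+1})` for `1 ≤ k ≤ m`.

Conversely, if the class of `x` spans `M / cl(M²)`, then `cl(Mᵏ) ⊆ ℂ xᵏ + cl(M^{k+1})` for every
`k` (closed plus finite-dimensional is closed). If the chain does not stabilise at `m`, then no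
`xᵏ` with `k ≤ m` lies in `cl(M^{k+1})`, so the classes of `1, x, …, xᵐ` form a basis of
`A / cl(M^{m+1})`. Since `x^{m+1} ≡ 0`, the coordinates in this basis multiply like the
coefficients of polynomials truncated at degree `m`, i.e. they satisfy the Leibniz rule, and
they are continuous because the quotient is finite-dimensional.
-/

open Polynomial

namespace Submodule

variable {K V : Type*} [Field K] [AddCommGroup V] [Module K V]
  {F : ℕ → Submodule K V} {v : ℕ → V} {n : ℕ}

theorem linearIndependent_mkQ_of_antitone (hF : Antitone F) (hv : ∀ i, v i ∈ F i)
    (hv' : ∀ i < n, v i ∉ F (i + 1)) :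
    LinearIndependent K fun i : Fin n ↦ (F n).mkQ (v i) := by
  rw [Fintype.linearIndependent_iff]
  intro g hg
  have hsum : ∑ i, g i • v i ∈ F n := by
    rw [← Quotient.mk_eq_zero, ← mkQ_apply, map_sum]
    simpa only [map_smul] using hg
  intro i
  induction i using WellFoundedLT.induction with
  | _ i ih =>
    by_contra hgi
    rw [← Finset.add_sum_erase _ _ (Finset.mem_univ i)] at hsum
    have hrest : ∑ j ∈ Finset.univ.erase i, g j • v j ∈ F (i + 1) := by
      refine sum_mem fun j hj ↦ ?_
      rcases lt_or_gt_of_ne (Finset.ne_of_mem_erase hj) with hji | hij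
      · simp [ih j hji]
      · exact smul_mem _ _ (hF (Nat.succ_le_of_lt hij) (hv j))
    exact hv' i i.isLt <| (smul_mem_iff _ hgi).1 <|
      (add_mem_cancel_right hrest).1 (hF (Nat.succ_le_of_lt i.isLt) hsum)

theorem span_mkQ_eq_top_of_le_sup (h0 : F 0 = ⊤)
    (hstep : ∀ j < n, F j ≤ K ∙ v j ⊔ F (j + 1)) :
    span K (range fun i : Fin n ↦ (F n).mkQ (v i)) = ⊤ := by
  set S := span K (range fun i : Fin n ↦ v i)
  have key : ∀ j ≤ n, F j ≤ F n ⊔ S := by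
    intro j hj
    induction hj using Nat.decreasingInduction with
    | self => exact le_sup_left
    | of_succ j hj ih =>
      refine (hstep j hj).trans (sup_le ?_ ih)
      exact (span_le.2 (by simpa using subset_span (mem_range_self (⟨j, hj⟩ : Fin n)))).trans
        le_sup_right
  rw [range_comp' (F n).mkQ, ← map_span, map_mkQ_eq_top, eq_top_iff, ← h0]
  exact key 0 n.zero_le

theorem exists_le_span_singleton_sup_of_rank_le_one {K V : Type*} [Field K]
    [AddCommGroup V] [Module K V] {P Q : Submodule K V}
    (h : Module.rank K (P ⧸ Q.comap P.subtype) ≤ 1) : ∃ x ∈ P, P ≤ K ∙ x ⊔ Q := by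
  obtain ⟨v₀, hv₀⟩ := rank_le_one_iff.1 h
  obtain ⟨⟨x, hx⟩, rfl⟩ := Quotient.mk_surjective _ v₀
  refine ⟨x, hx, fun y hy ↦ ?_⟩
  obtain ⟨r, hr⟩ := hv₀ (Quotient.mk ⟨y, hy⟩)
  rw [← Quotient.mk_smul, Quotient.eq] at hr
  exact mem_sup.2 ⟨r • x, mem_span_singleton.2 ⟨r, rfl⟩, y - r • x,
    by simpa [← neg_mem_iff (x := r • x - y)] using hr, add_sub_cancel _ _⟩

end Submodule

section PowCoeff

variable {K A : Type*} [Field K] [CommRing A] [Algebra K A] {N : Submodule K A} {m : ℕ}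
  (B : Module.Basis (Fin (m + 1)) K (A ⧸ N))

/-- When `B i` is the class of `x ^ i`, `powCoeff B k a` is the coefficient of `x ^ k` in `a`
modulo `N`; it is `0` for `k > m`. -/
def powCoeff (k : ℕ) : A →ₗ[K] K :=
  if h : k < m + 1 then B.coord ⟨k, h⟩ ∘ₗ N.mkQ else 0

def powCoeffPoly (a : A) : K[X] :=
  ∑ i ∈ Finset.range (m + 1), monomial i (powCoeff B i a)

theorem coeff_powCoeffPoly (a : A) (k : ℕ) : (powCoeffPoly B a).coeff k = powCoeff B k a := by
  simp only [powCoeffPoly, finsetSum_coeff, coeff_monomial, Finset.sum_ite_eq',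
    Finset.mem_range]
  split_ifs with hk
  · rfl
  · simp [powCoeff, hk]

theorem powCoeff_eq_of_sub_mem {a b : A} (h : a - b ∈ N) (k : ℕ) :
    powCoeff B k a = powCoeff B k b := by
  rw [← sub_eq_zero, ← map_sub]
  unfold powCoeff
  split_ifs <;> simp [(Submodule.Quotient.mk_eq_zero N).2 h]

variable {x : A} (hB : ∀ i, B i = N.mkQ (x ^ (i : ℕ)))
include hB

theorem sub_aeval_powCoeffPoly_mem (a : A) : a - aeval x (powCoeffPoly B a) ∈ N := by
  have h : aeval x (powCoeffPoly B a) = ∑ i : Fin (m + 1), B.repr (N.mkQ a) i • x ^ (i : ℕ) := by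
    rw [powCoeffPoly, map_sum, ← Fin.sum_univ_eq_sum_range]
    refine Finset.sum_congr rfl fun i _ ↦ ?_
    simp [powCoeff, aeval_monomial, Algebra.smul_def, Nat.lt_succ_iff.1 i.isLt]
  rw [← Submodule.Quotient.mk_eq_zero, Submodule.Quotient.mk_sub, sub_eq_zero, h,
    ← Submodule.mkQ_apply, ← Submodule.mkQ_apply, map_sum]
  simp only [map_smul, ← hB, B.sum_repr]

theorem powCoeff_zero {ψ : A →ₐ[K] K} (hψN : ∀ a ∈ N, ψ a = 0) (hψx : ψ x = 0) :
    powCoeff B 0 = ψ.toLinearMap := LinearMap.ext fun a ↦ by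
  have h := hψN _ (sub_aeval_powCoeffPoly_mem B hB a)
  rw [map_sub, sub_eq_zero, ← aeval_algHom_apply, hψx, ← coeff_zero_eq_aeval_zero,
    coeff_powCoeffPoly] at h
  exact h.symm

variable (hN : ∀ (a : A) {b}, b ∈ N → a * b ∈ N) (hxN : x ^ (m + 1) ∈ N)
include hN hxN

theorem powCoeff_pow {k : ℕ} (hk : k ≤ m) (i : ℕ) :
    powCoeff B k (x ^ i) = if i = k then 1 else 0 := by
  rcases lt_or_ge m i with hi | hi
  · have : x ^ i ∈ N := by
      simpa [← pow_add, Nat.sub_add_cancel hi] using hN (x ^ (i - (m + 1))) hxN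
    rw [if_neg (by omega), ← map_zero (powCoeff B k)]
    exact powCoeff_eq_of_sub_mem B (by simpa using this) k
  · simp [powCoeff, Nat.lt_succ_of_le hk, ← hB ⟨i, Nat.lt_succ_of_le hi⟩,
      Finsupp.single_apply, Fin.ext_iff]

theorem powCoeff_aeval {k : ℕ} (hk : k ≤ m) (p : K[X]) : powCoeff B k (aeval x p) = p.coeff k := by
  suffices (powCoeff B k).comp (aeval x).toLinearMap = lcoeff K k from
    LinearMap.congr_fun this p
  refine lhom_ext' fun i ↦ LinearMap.ext_ring ?_
  simp [powCoeff_pow B hB hN hxN hk, coeff_monomial]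

theorem powCoeff_mul {k : ℕ} (hk : k ≤ m) (f g : A) :
    powCoeff B k (f * g) = ∑ j ∈ Finset.range (k + 1), powCoeff B j f * powCoeff B (k - j) g := by
  have hfg : f * g - aeval x (powCoeffPoly B f * powCoeffPoly B g) ∈ N := by
    have := N.add_mem (hN g (sub_aeval_powCoeffPoly_mem B hB f))
      (hN (aeval x (powCoeffPoly B f)) (sub_aeval_powCoeffPoly_mem B hB g))
    convert this using 1
    rw [map_mul]; ring
  rw [powCoeff_eq_of_sub_mem B hfg, powCoeff_aeval B hB hN hxN hk, coeff_mul]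
  simp only [coeff_powCoeffPoly]
  exact Finset.Nat.sum_antidiagonal_eq_sum_range_succ (fun i j ↦ powCoeff B i f * powCoeff B j g) k

end PowCoeff

section ClPow

variable {A : Type*} [NormedCommRing A] [NormedAlgebra ℂ A] (I : Ideal A)

theorem coe_clPow (k : ℕ) : (clPow I k : Set A) = closure ((I ^ k : Ideal A) : Set A) :=
  Submodule.topologicalClosure_coe _

instance isClosed_clPow (k : ℕ) : IsClosed (clPow I k : Set A) :=
  Submodule.isClosed_topologicalClosure _

theorem pow_le_clPow (k : ℕ) : (I ^ k).restrictScalars ℂ ≤ clPow I k :=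
  Submodule.le_topologicalClosure _

theorem clPow_zero : clPow I 0 = ⊤ :=
  eq_top_iff.2 <| by simpa [Ideal.one_eq_top] using pow_le_clPow I 0

theorem clPow_antitone : Antitone (clPow I) := fun _ _ h ↦
  Submodule.topologicalClosure_mono fun _ ha ↦ Ideal.pow_le_pow_right h ha

variable {I}

theorem pow_mem_clPow {x : A} (hx : x ∈ I) (k : ℕ) : x ^ k ∈ clPow I k :=
  pow_le_clPow I k (Ideal.pow_mem_pow hx k)

theorem mul_mem_clPow {a b : A} {j l : ℕ} (ha : a ∈ clPow I j) (hb : b ∈ clPow I l) :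
    a * b ∈ clPow I (j + l) := by
  rw [← SetLike.mem_coe, coe_clPow] at *
  exact map_mem_closure₂ continuous_mul ha hb fun x hx y hy ↦ by
    rw [pow_add]; exact Ideal.mul_mem_mul hx hy

theorem mul_mem_clPow_left (a : A) {b : A} {k : ℕ} (hb : b ∈ clPow I k) :
    a * b ∈ clPow I k := by
  simpa using mul_mem_clPow (clPow_zero I ▸ Submodule.mem_top : a ∈ clPow I 0) hb

end ClPow

section PointDerivation

variable {A : Type*} [NormedCommRing A] [NormedAlgebra ℂ A]

structure IsPointDerivation (φ : A →ₐ[ℂ] ℂ) (m : ℕ) (d : ℕ → A →ₗ[ℂ] ℂ) : Prop where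
  zero : d 0 = φ.toLinearMap
  leibniz : ∀ k, 1 ≤ k → k ≤ m → ∀ f g : A,
    d k (f * g) = ∑ j ∈ Finset.range (k + 1), d j f * d (k - j) g

theorem hasNBPDAlg_iff {φ : A →ₐ[ℂ] ℂ} {m : ℕ} :
    HasNBPDAlg φ m ↔ ∃ d, IsPointDerivation φ m d ∧ (∀ k ≤ m, Continuous (d k)) ∧ d 1 ≠ 0 :=
  ⟨fun ⟨d, h0, hl, hc, h1⟩ ↦ ⟨d, ⟨h0, hl⟩, hc, h1⟩, fun ⟨d, ⟨h0, hl⟩, hc, h1⟩ ↦ ⟨d, h0, hl, hc, h1⟩⟩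

namespace IsPointDerivation

variable {φ : A →ₐ[ℂ] ℂ} {m : ℕ} {d : ℕ → A →ₗ[ℂ] ℂ} (hd : IsPointDerivation φ m d)
include hd

theorem zero_apply_eq_zero_of_mem_ker {a : A} (ha : a ∈ RingHom.ker φ) : d 0 a = 0 := by
  simpa [hd.zero] using ha

theorem apply_eq_zero_of_mem_pow {k : ℕ} (hk : k ≤ m) {a : A}
    (ha : a ∈ RingHom.ker φ ^ (k + 1)) : d k a = 0 := by
  induction k using Nat.strong_induction_on generalizing a with
  | _ k ih =>
    rcases Nat.eq_zero_or_pos k with rfl | hk0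
    · exact hd.zero_apply_eq_zero_of_mem_ker (by simpa using ha)
    rw [pow_succ] at ha
    refine Submodule.mul_induction_on ha (fun f hf g hg ↦ ?_) fun u v hu hv ↦ by
      rw [map_add, hu, hv, add_zero]
    rw [hd.leibniz k hk0 hk, Finset.sum_eq_zero]
    intro j hj
    rcases (Nat.lt_succ_iff.1 (Finset.mem_range.1 hj)).lt_or_eq with hjk | rfl
    · rw [ih j hjk (hjk.le.trans hk) (Ideal.pow_le_pow_right hjk hf), zero_mul]
    · rw [Nat.sub_self, hd.zero_apply_eq_zero_of_mem_ker hg, mul_zero]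

theorem apply_eq_zero_of_mem_closure {k : ℕ} (hk : k ≤ m) (hcont : Continuous (d k)) {a : A}
    (ha : a ∈ closure ((RingHom.ker φ ^ (k + 1) : Ideal A) : Set A)) : d k a = 0 :=
  closure_minimal (fun _ hb ↦ hd.apply_eq_zero_of_mem_pow hk hb)
    (isClosed_eq hcont continuous_const) ha

theorem apply_one_one (hm : 1 ≤ m) : d 1 1 = 0 := by
  have h := hd.leibniz 1 le_rfl hm 1 1
  simp only [mul_one, Finset.sum_range_succ, Finset.sum_range_zero, zero_add, hd.zero,
    AlgHom.toLinearMap_apply, map_one, one_mul, Nat.sub_zero, Nat.sub_self] at h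
  exact add_eq_left.1 h.symm

theorem exists_mem_ker_apply_one_eq_one (hm : 1 ≤ m) (hd1 : d 1 ≠ 0) :
    ∃ x ∈ RingHom.ker φ, d 1 x = 1 := by
  obtain ⟨a, ha⟩ := DFunLike.ne_iff.1 hd1
  refine ⟨(d 1 a)⁻¹ • (a - φ a • 1), ?_, ?_⟩
  · simp [RingHom.mem_ker, Algebra.smul_def]
  · simp [hd.apply_one_one hm, inv_mul_cancel₀ ha]

theorem apply_pow_eq_one {x : A} (hx : x ∈ RingHom.ker φ) (hdx : d 1 x = 1) {k : ℕ}
    (hk : k ≤ m) : d k (x ^ k) = 1 := by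
  induction k with
  | zero => simp [hd.zero]
  | succ k ih =>
    rw [pow_succ', hd.leibniz (k + 1) k.succ_pos hk, Finset.sum_eq_single 1]
    · rw [hdx, one_mul, Nat.add_sub_cancel, ih (Nat.le_of_succ_le hk)]
    · intro j hj hj1
      rcases Nat.eq_zero_or_pos j with rfl | hj0
      · rw [hd.zero_apply_eq_zero_of_mem_ker hx, zero_mul]
      have hj := Finset.mem_range.1 hj
      refine mul_eq_zero_of_right _ (hd.apply_eq_zero_of_mem_pow (by omega) ?_)
      exact Ideal.pow_le_pow_right (by omega) (Ideal.pow_mem_pow hx k)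
    · simp

end IsPointDerivation

theorem closure_pow_succ_ssubset_of_hasNBPDAlg {φ : A →ₐ[ℂ] ℂ} {m : ℕ} (h : HasNBPDAlg φ m)
    {k : ℕ} (hk : 1 ≤ k) (hkm : k ≤ m) :
    closure ((RingHom.ker φ ^ (k + 1) : Ideal A) : Set A)
      ⊂ closure ((RingHom.ker φ ^ k : Ideal A) : Set A) := by
  obtain ⟨d, hd, hcont, hd1⟩ := hasNBPDAlg_iff.1 h
  obtain ⟨x, hx, hdx⟩ := hd.exists_mem_ker_apply_one_eq_one (hk.trans hkm) hd1
  refine (closure_mono fun a ha ↦ Ideal.pow_le_pow_right k.le_succ ha).ssubset_of_not_subset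
    fun hsub ↦ ?_
  have hxk := hsub (subset_closure (Ideal.pow_mem_pow hx k))
  simpa [hd.apply_eq_zero_of_mem_closure hkm (hcont k hkm) hxk] using
    hd.apply_pow_eq_one hx hdx hkm

end PointDerivation

section Converse

variable {A : Type*} [NormedCommRing A] [NormedAlgebra ℂ A] {M : Ideal A} {x : A}

theorem pow_le_span_singleton_sup_clPow (hx : x ∈ M)
    (h : M.restrictScalars ℂ ≤ ℂ ∙ x ⊔ clPow M 2) {k : ℕ} (hk : 1 ≤ k) :
    (M ^ k).restrictScalars ℂ ≤ ℂ ∙ x ^ k ⊔ clPow M (k + 1) := by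
  induction k, hk using Nat.le_induction with
  | base => simpa using h
  | succ k hk ih =>
    intro a ha
    rw [Submodule.restrictScalars_mem, pow_succ] at ha
    refine Submodule.mul_induction_on ha (fun f hf g hg ↦ ?_) fun _ _ ↦ add_mem
    obtain ⟨_, hc, r, hr, rfl⟩ := Submodule.mem_sup.1 (ih hf)
    obtain ⟨c, rfl⟩ := Submodule.mem_span_singleton.1 hc
    obtain ⟨_, he, s, hs, rfl⟩ := Submodule.mem_sup.1 (h hg)
    obtain ⟨e, rfl⟩ := Submodule.mem_span_singleton.1 he
    have hxs : x ^ k * s ∈ clPow M (k + 1 + 1) :=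
      clPow_antitone M (by omega) (mul_mem_clPow (pow_mem_clPow hx k) hs)
    have hrg : r * (e • x + s) ∈ clPow M (k + 1 + 1) :=
      mul_mem_clPow hr (by simpa using pow_mem_clPow hg 1)
    refine Submodule.mem_sup.2 ⟨(c * e) • x ^ (k + 1), Submodule.smul_mem _ _
      (Submodule.mem_span_singleton_self _), _, add_mem (Submodule.smul_mem _ c hxs) hrg, ?_⟩
    simp only [Algebra.smul_def, map_mul]
    ring

theorem clPow_le_span_singleton_sup_clPow (hx : x ∈ M)
    (h : M.restrictScalars ℂ ≤ ℂ ∙ x ⊔ clPow M 2) {k : ℕ} (hk : 1 ≤ k) :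
    clPow M k ≤ ℂ ∙ x ^ k ⊔ clPow M (k + 1) :=
  Submodule.topologicalClosure_minimal _ (pow_le_span_singleton_sup_clPow hx h hk) <|
    sup_comm (clPow M (k + 1)) _ ▸
      Submodule.isClosed_sup_finiteDimensional _ _ (isClosed_clPow M _)

theorem clPow_ker_zero_le (φ : A →ₐ[ℂ] ℂ) :
    clPow (RingHom.ker φ) 0 ≤ ℂ ∙ (1 : A) ⊔ clPow (RingHom.ker φ) 1 := fun a _ ↦ by
  have ha : a - φ a • 1 ∈ RingHom.ker φ := by simp [RingHom.mem_ker, Algebra.smul_def]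
  exact Submodule.mem_sup.2 ⟨φ a • 1, Submodule.smul_mem _ _
    (Submodule.mem_span_singleton_self _), _, by simpa using pow_mem_clPow ha 1,
    add_sub_cancel _ _⟩

theorem pow_notMem_clPow_succ (hx : x ∈ M) {m : ℕ} (hxm : x ^ m ∉ clPow M (m + 1)) {k : ℕ}
    (hk : k ≤ m) : x ^ k ∉ clPow M (k + 1) := fun h ↦ hxm <| by
  simpa [← pow_add, show k + (m - k) = m by omega, show k + 1 + (m - k) = m + 1 by omega] using
    mul_mem_clPow h (pow_mem_clPow hx (m - k))

theorem pow_notMem_clPow_succ_of_closure_ne {m : ℕ}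
    (hstep : clPow M m ≤ ℂ ∙ x ^ m ⊔ clPow M (m + 1))
    (hne : closure ((M ^ m : Ideal A) : Set A) ≠ closure ((M ^ (m + 1) : Ideal A) : Set A)) :
    x ^ m ∉ clPow M (m + 1) := fun h ↦ hne <| by
  rw [← coe_clPow, ← coe_clPow]
  refine congrArg _ (le_antisymm (hstep.trans (sup_le ?_ le_rfl)) (clPow_antitone M m.le_succ))
  exact (Submodule.span_singleton_le_iff_mem _ _).2 h

theorem map_eq_zero_of_mem_clPow_ker [CompleteSpace A] (φ : A →ₐ[ℂ] ℂ) {k : ℕ} (hk : 1 ≤ k)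
    {a : A} (ha : a ∈ clPow (RingHom.ker φ) k) : φ a = 0 := by
  have ha₁ := clPow_antitone _ hk ha
  rw [← SetLike.mem_coe, coe_clPow, pow_one] at ha₁
  exact closure_minimal (fun _ hb ↦ hb) (isClosed_eq (map_continuous φ) continuous_const) ha₁

theorem continuous_powCoeff {N : Submodule ℂ A} [IsClosed (N : Set A)] {m : ℕ}
    (B : Module.Basis (Fin (m + 1)) ℂ (A ⧸ N)) (k : ℕ) : Continuous (powCoeff B k) := by
  have := B.finiteDimensional_of_finite
  unfold powCoeff
  split_ifs
  · rw [LinearMap.coe_comp]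
    exact (B.coord _).continuous_of_finiteDimensional.comp N.continuous_mkQ
  · exact continuous_zero

theorem hasNBPDAlg_of_forall_pow_notMem [CompleteSpace A] {φ : A →ₐ[ℂ] ℂ} {m : ℕ} (hm : 1 ≤ m)
    (hx : x ∈ RingHom.ker φ)
    (hstep : ∀ j, clPow (RingHom.ker φ) j ≤ ℂ ∙ x ^ j ⊔ clPow (RingHom.ker φ) (j + 1))
    (hnot : ∀ k ≤ m, x ^ k ∉ clPow (RingHom.ker φ) (k + 1)) :
    HasNBPDAlg φ m := by
  set N := clPow (RingHom.ker φ) (m + 1)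
  let B := Module.Basis.mk
    (Submodule.linearIndependent_mkQ_of_antitone (clPow_antitone _) (pow_mem_clPow hx)
      fun i hi ↦ hnot i (Nat.le_of_lt_succ hi))
    (Submodule.span_mkQ_eq_top_of_le_sup (clPow_zero _) fun j _ ↦ hstep j).ge
  have hB : ∀ i, B i = N.mkQ (x ^ (i : ℕ)) := Module.Basis.mk_apply _ _
  have hN : ∀ (a : A) {b}, b ∈ N → a * b ∈ N := fun a _ hb ↦ mul_mem_clPow_left a hb
  have hxN : x ^ (m + 1) ∈ N := pow_mem_clPow hx _
  refine hasNBPDAlg_iff.2 ⟨powCoeff B, ⟨?_, fun k _ hk ↦ powCoeff_mul B hB hN hxN hk⟩,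
    fun k _ ↦ continuous_powCoeff B k, fun h ↦ ?_⟩
  · exact powCoeff_zero B hB (fun a ha ↦ map_eq_zero_of_mem_clPow_ker φ m.succ_pos ha) hx
  · simpa [h] using powCoeff_pow B hB hN hxN hm 1

end Converse

/-- Lemma 2.6: for `M = ker φ` with `dim(M/cl M²) ≤ 1`, there is a nondegenerate
bounded point derivation of order `m` at `φ` iff `cl(M^m) ≠ cl(M^{m+1})`, in which case
the chain `M ⊋ cl(M²) ⊋ ⋯ ⊋ cl(M^{m+1})` of closed powers is strictly decreasing. -/
theorem derivations_vs_ideal_powers {A : Type*} [NormedCommRing A]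
    [NormedAlgebra ℂ A] [CompleteSpace A]
    (φ : A →ₐ[ℂ] ℂ) (M : Ideal A) (hM : M = RingHom.ker φ)
    (m : ℕ) (hm : 1 ≤ m)
    (hdim : Module.rank ℂ
      (↥(M.restrictScalars ℂ) ⧸
        Submodule.comap (M.restrictScalars ℂ).subtype (clPow M 2)) ≤ 1) :
    (HasNBPDAlg φ m ↔
      closure ((M ^ m : Ideal A) : Set A) ≠ closure ((M ^ (m + 1) : Ideal A) : Set A)) ∧
    (HasNBPDAlg φ m → ∀ k : ℕ, 1 ≤ k → k ≤ m →
      closure ((M ^ (k + 1) : Ideal A) : Set A)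
        ⊂ closure ((M ^ k : Ideal A) : Set A)) := by
  subst hM
  refine ⟨⟨fun h ↦ (closure_pow_succ_ssubset_of_hasNBPDAlg h hm le_rfl).ne', fun hne ↦ ?_⟩,
    fun h _ ↦ closure_pow_succ_ssubset_of_hasNBPDAlg h⟩
  obtain ⟨x, hx, hxM⟩ := Submodule.exists_le_span_singleton_sup_of_rank_le_one hdim
  have hstep : ∀ j, clPow (RingHom.ker φ) j ≤ ℂ ∙ x ^ j ⊔ clPow (RingHom.ker φ) (j + 1) := by
    rintro (_ | j)
    · simpa using clPow_ker_zero_le φ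
    · exact clPow_le_span_singleton_sup_clPow hx hxM j.succ_pos
  exact hasNBPDAlg_of_forall_pow_notMem hm hx hstep fun k hk ↦
    pow_notMem_clPow_succ hx (pow_notMem_clPow_succ_of_closure_ne (hstep m) hne) hk

end
end

section
/- Let K be a compact plane set, let a ∈ K, and let m ∈ ℕ. Then the following are equivalent: (i) there exists a nondegenerate bounded point derivation of order m on R(K) at a; (ii) M_a ⊋ cl(M_a²) ⊋ ⋯ ⊋ cl(M_a^{m+1}) in R(K); (iii) the function (z−a)^m does not belong to the closure in R(K) of the set {(z−a)^{m+1}·g : g ∈ R₀(K)}. -/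
open scoped ENNReal
open Metric Set Filter

noncomputable section

/-- `R₀(K)`: restrictions to `K` of rational functions with poles off `K`. -/
def R0 (K : Set ℂ) : Set C(K, ℂ) :=
  {f | ∃ p q : Polynomial ℂ, (∀ z ∈ K, q.eval z ≠ 0) ∧
      ∀ z : K, f z = p.eval (z : ℂ) / q.eval (z : ℂ)}

/-- `R(K)`: the uniform closure of `R₀(K)` in `C(K, ℂ)`. -/
def RK (K : Set ℂ) : Set C(K, ℂ) := closure (R0 K)

/-- `M_x`: the ideal of functions in `R(K)` vanishing at `x`. -/
def Mx (K : Set ℂ) (x : ℂ) : Set C(K, ℂ) :=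
  {f | f ∈ RK K ∧ ∀ h : x ∈ K, f ⟨x, h⟩ = 0}

/-- `J_x`: the ideal of functions in `R(K)` vanishing on a neighborhood of `x` in `K`. -/
def Jx (K : Set ℂ) (x : ℂ) : Set C(K, ℂ) :=
  {f | f ∈ RK K ∧ ∃ U : Set ℂ, IsOpen U ∧ x ∈ U ∧ ∀ z : K, (z : ℂ) ∈ U → f z = 0}

/-- The `m`-th ideal power of a set `S` in the ring `C(K, ℂ)`:
finite sums of `m`-fold products of elements of `S`. -/
def idealPow {K : Set ℂ} (S : Set C(K, ℂ)) (m : ℕ) : Set C(K, ℂ) :=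
  {f | ∃ (n : ℕ) (g : Fin n → Fin m → C(K, ℂ)),
      (∀ i j, g i j ∈ S) ∧ f = ∑ i, ∏ j, g i j}

/-- `R(K)` is normal. -/
def RKNormal (K : Set ℂ) : Prop :=
  ∀ K₀ K₁ : Set ℂ, K₀ ⊆ K → K₁ ⊆ K → IsClosed K₀ → IsClosed K₁ → Disjoint K₀ K₁ →
    ∃ f ∈ RK K, (∀ z : K, (z : ℂ) ∈ K₀ → f z = 0) ∧ (∀ z : K, (z : ℂ) ∈ K₁ → f z = 1)

/-- `R(K)` is strongly regular at `x`. -/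
def StronglyRegularAt (K : Set ℂ) (x : ℂ) : Prop := closure (Jx K x) = Mx K x

/-- `R(K)` is weakly strongly regular. -/
def WeaklyStronglyRegular (K : Set ℂ) : Prop :=
  ∀ x ∈ K, ∃ m : ℕ, 1 ≤ m ∧ idealPow (Mx K x) m ⊆ closure (Jx K x)

/-- A Swiss cheese: a compact subset of the closed unit disc with empty interior
such that `R(K) ≠ C(K)`. -/
def IsSwissCheese (K : Set ℂ) : Prop :=
  K.Nonempty ∧ IsCompact K ∧ K ⊆ closedBall (0 : ℂ) 1 ∧ interior K = ∅ ∧ RK K ≠ univ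

/-- A point derivation of order `m` on `R(K)` at `a`. -/
def IsPDOrder (K : Set ℂ) (a : ℂ) (m : ℕ) (d : ℕ → C(K, ℂ) → ℂ) : Prop :=
  (∀ f ∈ RK K, ∀ h : a ∈ K, d 0 f = f ⟨a, h⟩) ∧
  (∀ k ≤ m, ∀ f ∈ RK K, ∀ g ∈ RK K, d k (f + g) = d k f + d k g) ∧
  (∀ k ≤ m, ∀ c : ℂ, ∀ f ∈ RK K, d k (c • f) = c * d k f) ∧
  (∀ k, 1 ≤ k → k ≤ m → ∀ f ∈ RK K, ∀ g ∈ RK K,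
      d k (f * g) = ∑ j ∈ Finset.range (k + 1), d j f * d (k - j) g)

/-- A point derivation of infinite order on `R(K)` at `a`. -/
def IsPDInf (K : Set ℂ) (a : ℂ) (d : ℕ → C(K, ℂ) → ℂ) : Prop :=
  (∀ f ∈ RK K, ∀ h : a ∈ K, d 0 f = f ⟨a, h⟩) ∧
  (∀ k, ∀ f ∈ RK K, ∀ g ∈ RK K, d k (f + g) = d k f + d k g) ∧
  (∀ (k : ℕ) (c : ℂ), ∀ f ∈ RK K, d k (c • f) = c * d k f) ∧
  (∀ k, 1 ≤ k → ∀ f ∈ RK K, ∀ g ∈ RK K,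
      d k (f * g) = ∑ j ∈ Finset.range (k + 1), d j f * d (k - j) g)

/-- There is a nondegenerate bounded point derivation of order `m` on `R(K)` at `a`. -/
def HasNBPD (K : Set ℂ) (a : ℂ) (m : ℕ) : Prop :=
  ∃ d : ℕ → C(K, ℂ) → ℂ, IsPDOrder K a m d ∧
    (∀ k ≤ m, Continuous fun f : RK K => d k f.1) ∧
    ∃ f ∈ RK K, d 1 f ≠ 0

/-- There is a nondegenerate bounded point derivation of infinite order on `R(K)` at `a`. -/
def HasNBPDInf (K : Set ℂ) (a : ℂ) : Prop :=
  ∃ d : ℕ → C(K, ℂ) → ℂ, IsPDInf K a d ∧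
    (∀ k, Continuous fun f : RK K => d k f.1) ∧
    ∃ f ∈ RK K, d 1 f ≠ 0

/-- The Browder term `r(D)/s_a(D)^{m+1}` for the disc with center `c` and radius `ρ`;
here `s_a(D) = |dist a c − ρ|` is the distance from `a` to the boundary circle. -/
def browderTerm (a c : ℂ) (ρ : ℝ) (m : ℕ) : ℝ≥0∞ :=
  ENNReal.ofReal ρ / ENNReal.ofReal (|dist a c - ρ| ^ (m + 1))

/-- The `m`-th order Browder sum at `a` for a family of discs together with the unit disc. -/
def browderSum {ι : Type*} (c : ι → ℂ) (ρ : ι → ℝ) (a : ℂ) (m : ℕ) : ℝ≥0∞ :=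
  browderTerm a 0 1 m + ∑' i, browderTerm a (c i) (ρ i) m

/-- Sup norm of `f` over `K`. -/
def supNormOn (K : Set ℂ) (f : ℂ → ℂ) : ℝ := ⨆ z : K, ‖f (z : ℂ)‖

/-- The rational function `p/q`. -/
def ratFun (p q : Polynomial ℂ) : ℂ → ℂ := fun z => p.eval z / q.eval z

/-- `δ_{a,m}(f) = f⁽ᵐ⁾(a)/m!`. -/
def deltaVal (m : ℕ) (f : ℂ → ℂ) (a : ℂ) : ℂ := iteratedDeriv m f a / (m.factorial : ℂ)

/-- `δ_{a,m}` is continuous (bounded) on `R₀(K)` with respect to the sup norm. -/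
def DeltaCont (K : Set ℂ) (a : ℂ) (m : ℕ) : Prop :=
  ∃ C : ℝ, ∀ p q : Polynomial ℂ, (∀ z ∈ K, q.eval z ≠ 0) →
    ‖deltaVal m (ratFun p q) a‖ ≤ C * supNormOn K (ratFun p q)

/-- The square root of a plane set: `{z : z² ∈ E}`. -/
def sqrtSet (E : Set ℂ) : Set ℂ := {z | z ^ 2 ∈ E}

/-- The restriction of `z ↦ zᵐ` to `K`. -/
def zpowMap (K : Set ℂ) (m : ℕ) : C(K, ℂ) :=
  ⟨fun z => (z : ℂ) ^ m, continuous_subtype_val.pow m⟩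

/-- The restriction of `z ↦ (z−a)ⁿ` to `K`. -/
def zamMap (K : Set ℂ) (a : ℂ) (n : ℕ) : C(K, ℂ) :=
  ⟨fun z => ((z : ℂ) - a) ^ n, (continuous_subtype_val.sub continuous_const).pow n⟩

/-!
If `d` is a bounded point derivation of order `m` at `a`, then `d k` vanishes on every product of
more than `k` functions vanishing at `a` (each term of its Leibniz expansion evaluates a factor at
`a`), hence by continuity on `cl(M_aᵏ⁺¹)`; but `d k ((z - a)ᵏ) = (d 1 (z - a))ᵏ ≠ 0`, since
otherwise `d 1` would vanish on `R₀(K)`, every `f ∈ R₀(K)` being `f(a) + (z - a) s` with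
`s ∈ R₀(K)`. The same factorisation puts `M_aᵐ` inside `cl((z - a)ᵐ R₀(K))`, so if
`(z - a)ᵐ ∈ cl((z - a)ᵐ⁺¹ R₀(K))` the chain stops at `m`. Conversely, if it is not, Hahn–Banach
gives a functional `L` killing `(z - a)ᵐ⁺¹ R₀(K)`, which can be normalised to
`L((z - a)ⁱ) = δᵢₘ`. Then `L((z - a)ᵐ⁻ᵏ f)` is the `k`-th Taylor coefficient at `a` of
`f ∈ R₀(K)`, so these functionals satisfy the Leibniz rule on `R₀(K)`, and by continuity on `R(K)`.
-/

open Polynomial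

section Rational

variable {K : Set ℂ} {a : ℂ}

def R0Subalgebra (K : Set ℂ) : Subalgebra ℂ C(K, ℂ) where
  carrier := R0 K
  mul_mem' := by
    rintro f g ⟨p₁, q₁, hq₁, hf⟩ ⟨p₂, q₂, hq₂, hg⟩
    refine ⟨p₁ * p₂, q₁ * q₂, fun z hz => by simp [hq₁ z hz, hq₂ z hz], fun z => ?_⟩
    simp only [ContinuousMap.mul_apply, hf z, hg z, eval_mul]
    ring
  add_mem' := by
    rintro f g ⟨p₁, q₁, hq₁, hf⟩ ⟨p₂, q₂, hq₂, hg⟩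
    refine ⟨p₁ * q₂ + p₂ * q₁, q₁ * q₂, fun z hz => by simp [hq₁ z hz, hq₂ z hz], fun z => ?_⟩
    simp only [ContinuousMap.add_apply, hf z, hg z, eval_mul, eval_add]
    rw [div_add_div _ _ (hq₁ z z.2) (hq₂ z z.2)]
    ring
  algebraMap_mem' c := ⟨C c, 1, by simp, by simp⟩

lemma R0_subset_RK : R0 K ⊆ RK K := subset_closure

lemma isClosed_RK : IsClosed (RK K) := isClosed_closure

@[simp]
lemma zamMap_apply (n : ℕ) (z : K) : zamMap K a n z = ((z : ℂ) - a) ^ n := rfl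

lemma zamMap_zero : zamMap K a 0 = 1 := by
  ext z; simp

lemma zamMap_add (i j : ℕ) : zamMap K a (i + j) = zamMap K a i * zamMap K a j := by
  ext z; simp [pow_add]

lemma zamMap_one_pow (n : ℕ) : zamMap K a 1 ^ n = zamMap K a n := by
  ext z; simp

lemma zamMap_mem_R0 (n : ℕ) : zamMap K a n ∈ R0 K :=
  ⟨(X - C a) ^ n, 1, by simp, by simp⟩

lemma zamMap_mem_RK (n : ℕ) : zamMap K a n ∈ RK K := R0_subset_RK (zamMap_mem_R0 n)

lemma aeval_zamMap_mem_R0 (c : ℂ[X]) : aeval (zamMap K a 1) c ∈ R0 K :=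
  Algebra.adjoin_le (R := ℂ) (S := R0Subalgebra K)
    (singleton_subset_iff.2 (zamMap_mem_R0 1)) (aeval_mem_adjoin_singleton ℂ _)

lemma exists_R0_eq_smul_one_add_zamMap_mul (ha : a ∈ K) {f : C(K, ℂ)} (hf : f ∈ R0 K) :
    ∃ s ∈ R0 K, f = f ⟨a, ha⟩ • 1 + zamMap K a 1 * s := by
  obtain ⟨p, q, hq, hpq⟩ := hf
  have hroot : (p - C (f ⟨a, ha⟩) * q).IsRoot a := by
    simp [hpq, div_mul_cancel₀ _ (hq a ha)]
  obtain ⟨r, hr⟩ := dvd_iff_isRoot.2 hroot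
  have hcont : Continuous fun z : K => r.eval (z : ℂ) / q.eval (z : ℂ) :=
    (r.continuous.comp continuous_subtype_val).div (q.continuous.comp continuous_subtype_val)
      fun z => hq z z.2
  refine ⟨⟨_, hcont⟩, ⟨r, q, hq, fun z => rfl⟩, ?_⟩
  ext z
  have hrz := congrArg (eval (z : ℂ)) hr
  simp only [eval_sub, eval_mul, eval_C, eval_X] at hrz
  simp only [ContinuousMap.add_apply, ContinuousMap.smul_apply, ContinuousMap.one_apply,
    ContinuousMap.mul_apply, ContinuousMap.coe_mk, zamMap_apply, pow_one, smul_eq_mul, hpq z]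
  field_simp [hq z z.2]
  linear_combination hrz

end Rational

section ZamMulR0

variable {K : Set ℂ} {a : ℂ}

def zamMulR0 (K : Set ℂ) (a : ℂ) (n : ℕ) : Submodule ℂ C(K, ℂ) where
  carrier := {h | ∃ g ∈ R0 K, h = zamMap K a n * g}
  add_mem' := by
    rintro _ _ ⟨g₁, hg₁, rfl⟩ ⟨g₂, hg₂, rfl⟩
    exact ⟨g₁ + g₂, (R0Subalgebra K).add_mem hg₁ hg₂, (mul_add _ _ _).symm⟩
  zero_mem' := ⟨0, (R0Subalgebra K).zero_mem, (mul_zero _).symm⟩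
  smul_mem' := by
    rintro c _ ⟨g, hg, rfl⟩
    exact ⟨c • g, (R0Subalgebra K).smul_mem hg c, (mul_smul_comm c _ g).symm⟩

lemma zamMap_mul_mem_zamMulR0 (n : ℕ) {g : C(K, ℂ)} (hg : g ∈ R0 K) :
    zamMap K a n * g ∈ zamMulR0 K a n :=
  ⟨g, hg, rfl⟩

lemma R0_subset_zamMulR0_zero : R0 K ⊆ zamMulR0 K a 0 := fun g hg =>
  ⟨g, hg, by rw [zamMap_zero, one_mul]⟩

lemma mul_mem_zamMulR0 {i j : ℕ} {f g : C(K, ℂ)} (hf : f ∈ zamMulR0 K a i)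
    (hg : g ∈ zamMulR0 K a j) : f * g ∈ zamMulR0 K a (i + j) := by
  obtain ⟨f', hf', rfl⟩ := hf
  obtain ⟨g', hg', rfl⟩ := hg
  refine ⟨f' * g', (R0Subalgebra K).mul_mem hf' hg', ?_⟩
  rw [zamMap_add]
  ring

lemma mul_R0_mem_zamMulR0 {n : ℕ} {f g : C(K, ℂ)} (hf : f ∈ zamMulR0 K a n) (hg : g ∈ R0 K) :
    f * g ∈ zamMulR0 K a n :=
  mul_mem_zamMulR0 (j := 0) hf (R0_subset_zamMulR0_zero hg)

variable [CompactSpace K]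

lemma mul_mem_closure_zamMulR0 {i j : ℕ} {f g : C(K, ℂ)}
    (hf : f ∈ closure (zamMulR0 K a i : Set C(K, ℂ)))
    (hg : g ∈ closure (zamMulR0 K a j : Set C(K, ℂ))) :
    f * g ∈ closure (zamMulR0 K a (i + j) : Set C(K, ℂ)) :=
  map_mem_closure₂ continuous_mul hf hg fun _ hf' _ hg' => mul_mem_zamMulR0 hf' hg'

lemma Mx_subset_closure_zamMulR0_one (ha : a ∈ K) :
    Mx K a ⊆ closure (zamMulR0 K a 1 : Set C(K, ℂ)) := by
  rintro f ⟨hfR, hfa⟩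
  have hsub : MapsTo (fun g : C(K, ℂ) => g - g ⟨a, ha⟩ • 1) (R0 K) (zamMulR0 K a 1) := by
    intro g hg
    obtain ⟨s, hs, hgs⟩ := exists_R0_eq_smul_one_add_zamMap_mul ha hg
    exact ⟨s, hs, by rw [sub_eq_iff_eq_add', ← hgs]⟩
  simpa [hfa ha] using map_mem_closure (by fun_prop) hfR hsub

end ZamMulR0

section IdealPow

variable {K : Set ℂ} {a : ℂ}

lemma prod_mem_idealPow {S : Set C(K, ℂ)} {n : ℕ} {g : Fin n → C(K, ℂ)} (hg : ∀ j, g j ∈ S) :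
    ∏ j, g j ∈ idealPow S n :=
  ⟨1, fun _ => g, fun _ => hg, by simp⟩

lemma idealPow_succ_subset {S : Set C(K, ℂ)} (hS : ∀ f ∈ S, ∀ g ∈ S, f * g ∈ S) {k : ℕ}
    (hk : 1 ≤ k) : idealPow S (k + 1) ⊆ idealPow S k := by
  obtain ⟨k, rfl⟩ : ∃ k', k = k' + 1 := ⟨k - 1, by omega⟩
  rintro f ⟨n, g, hg, rfl⟩
  refine ⟨n, fun i => Fin.cons (g i 0 * g i 1) fun j => g i j.succ.succ, fun i j => ?_, ?_⟩
  · refine Fin.cases ?_ (fun j => ?_) j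
    · simpa using hS _ (hg i 0) _ (hg i 1)
    · simpa using hg i j.succ.succ
  · refine Finset.sum_congr rfl fun i _ => ?_
    rw [Fin.prod_univ_succ, Fin.prod_univ_succ, Fin.prod_cons, mul_assoc, Fin.succ_zero_eq_one]

lemma zamMap_one_mem_Mx : zamMap K a 1 ∈ Mx K a :=
  ⟨zamMap_mem_RK 1, fun _ => by simp⟩

lemma zamMap_mem_idealPow_Mx (n : ℕ) : zamMap K a n ∈ idealPow (Mx K a) n := by
  simpa [zamMap_one_pow] using prod_mem_idealPow fun _ : Fin n => zamMap_one_mem_Mx (a := a)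

lemma zamMulR0_succ_subset_idealPow_Mx (n : ℕ) :
    (zamMulR0 K a (n + 1) : Set C(K, ℂ)) ⊆ idealPow (Mx K a) (n + 1) := by
  rintro _ ⟨g, hg, rfl⟩
  have hmem : ∀ j : Fin (n + 1),
      (Fin.cons (zamMap K a 1 * g) fun _ : Fin n => zamMap K a 1 : Fin (n + 1) → C(K, ℂ)) j
        ∈ Mx K a := by
    refine Fin.cases ?_ fun _ => zamMap_one_mem_Mx
    exact ⟨R0_subset_RK ((R0Subalgebra K).mul_mem (zamMap_mem_R0 1) hg), fun _ => by simp⟩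
  convert prod_mem_idealPow hmem using 1
  rw [Fin.prod_cons, Fin.prod_const, zamMap_one_pow, add_comm, zamMap_add]
  ring

variable [CompactSpace K]

lemma coe_topologicalClosure_R0Subalgebra :
    ((R0Subalgebra K).topologicalClosure : Set C(K, ℂ)) = RK K :=
  Subalgebra.topologicalClosure_coe _

lemma mem_RK_iff {f : C(K, ℂ)} : f ∈ RK K ↔ f ∈ (R0Subalgebra K).topologicalClosure := by
  rw [← SetLike.mem_coe, coe_topologicalClosure_R0Subalgebra]

lemma Mx_mul_mem {f g : C(K, ℂ)} (hf : f ∈ Mx K a) (hg : g ∈ Mx K a) : f * g ∈ Mx K a :=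
  ⟨mem_RK_iff.2 (mul_mem (mem_RK_iff.1 hf.1) (mem_RK_iff.1 hg.1)), fun h => by simp [hf.2 h]⟩

lemma idealPow_Mx_subset_RK (n : ℕ) : idealPow (Mx K a) n ⊆ RK K := by
  rintro _ ⟨N, g, hg, rfl⟩
  exact mem_RK_iff.2 (sum_mem fun i _ => prod_mem fun j _ => mem_RK_iff.1 (hg i j).1)

lemma prod_mem_closure_zamMulR0 (ha : a ∈ K) {n : ℕ} {g : Fin n → C(K, ℂ)}
    (hg : ∀ j, g j ∈ Mx K a) : ∏ j, g j ∈ closure (zamMulR0 K a n : Set C(K, ℂ)) := by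
  induction n with
  | zero => simpa using subset_closure (R0_subset_zamMulR0_zero (R0Subalgebra K).one_mem)
  | succ n ih =>
    have h := mul_mem_closure_zamMulR0 (Mx_subset_closure_zamMulR0_one ha (hg 0))
      (ih fun j => hg j.succ)
    rwa [add_comm 1 n, ← Fin.prod_univ_succ] at h

lemma idealPow_Mx_subset_closure_zamMulR0 (ha : a ∈ K) (n : ℕ) :
    idealPow (Mx K a) n ⊆ closure (zamMulR0 K a n : Set C(K, ℂ)) := by
  rintro _ ⟨N, g, hg, rfl⟩
  rw [← Submodule.topologicalClosure_coe, SetLike.mem_coe]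
  refine sum_mem fun i _ => ?_
  rw [← SetLike.mem_coe, Submodule.topologicalClosure_coe]
  exact prod_mem_closure_zamMulR0 ha (hg i)

lemma zamMap_notMem_closure_zamMulR0 (ha : a ∈ K) {m : ℕ}
    (h : closure (idealPow (Mx K a) (m + 1)) ⊂ closure (idealPow (Mx K a) m)) :
    zamMap K a m ∉ closure (zamMulR0 K a (m + 1) : Set C(K, ℂ)) := by
  intro hm
  refine h.2 (closure_minimal ?_ isClosed_closure)
  have hstep : (zamMulR0 K a m : Set C(K, ℂ)) ⊆ closure (zamMulR0 K a (m + 1)) := by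
    rintro _ ⟨g, hg, rfl⟩
    exact mul_mem_closure_zamMulR0 (j := 0) hm
      (subset_closure (R0_subset_zamMulR0_zero hg))
  calc idealPow (Mx K a) m ⊆ closure (zamMulR0 K a m : Set C(K, ℂ)) :=
        idealPow_Mx_subset_closure_zamMulR0 ha m
    _ ⊆ closure (zamMulR0 K a (m + 1) : Set C(K, ℂ)) := closure_minimal hstep isClosed_closure
    _ ⊆ closure (idealPow (Mx K a) (m + 1)) :=
        closure_mono (zamMulR0_succ_subset_idealPow_Mx m)

end IdealPow

namespace IsPDOrder

variable {K : Set ℂ} {a : ℂ} {m : ℕ} {d : ℕ → C(K, ℂ) → ℂ}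
  (hd : IsPDOrder K a m d) (ha : a ∈ K)
include hd ha

lemma apply_mul_eq_sum {k : ℕ} (hk : 1 ≤ k) (hkm : k ≤ m) {f g : C(K, ℂ)} (hf : f ∈ RK K)
    (hg : g ∈ RK K) :
    d k (f * g) = ∑ j ∈ Finset.range k, d (j + 1) f * d (k - (j + 1)) g + f ⟨a, ha⟩ * d k g := by
  rw [hd.2.2.2 k hk hkm f hf g hg, Finset.sum_range_succ', hd.1 f hf ha, Nat.sub_zero]

lemma apply_one_one (hm : 1 ≤ m) : d 1 1 = 0 := by
  have h1 : (1 : C(K, ℂ)) ∈ RK K := R0_subset_RK (R0Subalgebra K).one_mem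
  have h := hd.apply_mul_eq_sum ha le_rfl hm h1 h1
  simp only [mul_one, Finset.range_one, Finset.sum_singleton, zero_add, Nat.sub_self,
    hd.1 1 h1 ha, ContinuousMap.one_apply, one_mul] at h
  linear_combination -h

lemma apply_one_eq_zero_of_mem_R0 (hm : 1 ≤ m) (h : d 1 (zamMap K a 1) = 0) {f : C(K, ℂ)}
    (hf : f ∈ R0 K) : d 1 f = 0 := by
  obtain ⟨s, hs, hfs⟩ := exists_R0_eq_smul_one_add_zamMap_mul ha hf
  have h1 := (R0Subalgebra K).one_mem
  rw [hfs, hd.2.1 1 hm _ (R0_subset_RK ((R0Subalgebra K).smul_mem h1 _)) _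
      (R0_subset_RK ((R0Subalgebra K).mul_mem (zamMap_mem_R0 1) hs)),
    hd.2.2.1 1 hm _ _ (R0_subset_RK h1), hd.apply_one_one ha hm,
    hd.apply_mul_eq_sum ha le_rfl hm (zamMap_mem_RK 1) (R0_subset_RK hs)]
  simp [h]

variable [CompactSpace K]

lemma apply_prod_eq_zero {n : ℕ} {g : Fin n → C(K, ℂ)} (hg : ∀ j, g j ∈ Mx K a) {k : ℕ}
    (hkn : k < n) (hkm : k ≤ m) : d k (∏ j, g j) = 0 := by
  induction n generalizing k with
  | zero => omega
  | succ n ih =>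
    have htail : ∏ j : Fin n, g j.succ ∈ RK K :=
      idealPow_Mx_subset_RK n (prod_mem_idealPow fun j => hg j.succ)
    rcases Nat.eq_zero_or_pos k with rfl | hk
    · rw [hd.1 _ (idealPow_Mx_subset_RK _ (prod_mem_idealPow hg)) ha, ContinuousMap.prod_apply]
      exact Finset.prod_eq_zero (Finset.mem_univ 0) ((hg 0).2 ha)
    · rw [Fin.prod_univ_succ, hd.apply_mul_eq_sum ha hk hkm (hg 0).1 htail, (hg 0).2 ha, zero_mul,
        add_zero]
      refine Finset.sum_eq_zero fun j hj => ?_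
      rw [ih (fun j => hg j.succ) (by simp at hj; omega) (by omega), mul_zero]

lemma apply_prod_eq_prod {n : ℕ} {g : Fin n → C(K, ℂ)} (hg : ∀ j, g j ∈ Mx K a) (hnm : n ≤ m) :
    d n (∏ j, g j) = ∏ j, d 1 (g j) := by
  induction n with
  | zero => simp [hd.1 1 (R0_subset_RK (R0Subalgebra K).one_mem) ha]
  | succ n ih =>
    have htail : ∏ j : Fin n, g j.succ ∈ RK K :=
      idealPow_Mx_subset_RK n (prod_mem_idealPow fun j => hg j.succ)
    rw [Fin.prod_univ_succ, hd.apply_mul_eq_sum ha (by omega) hnm (hg 0).1 htail, (hg 0).2 ha,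
      zero_mul, add_zero, Finset.sum_range_succ', Finset.sum_eq_zero fun j hj => ?_, zero_add,
      Nat.add_sub_cancel, ih (fun j => hg j.succ) (by omega), Fin.prod_univ_succ]
    rw [hd.apply_prod_eq_zero ha (fun j => hg j.succ) (by simp at hj; omega) (by omega), mul_zero]

lemma apply_eq_zero_of_mem_idealPow {n k : ℕ} {f : C(K, ℂ)} (hf : f ∈ idealPow (Mx K a) n)
    (hkn : k < n) (hkm : k ≤ m) : d k f = 0 := by
  obtain ⟨N, g, hg, rfl⟩ := hf
  refine (Finset.sum_induction _ (fun f => f ∈ RK K ∧ d k f = 0) ?_ ?_ ?_).2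
  · rintro f g ⟨hf, hf0⟩ ⟨hg, hg0⟩
    exact ⟨mem_RK_iff.2 (add_mem (mem_RK_iff.1 hf) (mem_RK_iff.1 hg)),
      by rw [hd.2.1 k hkm f hf g hg, hf0, hg0, add_zero]⟩
  · refine ⟨R0_subset_RK (R0Subalgebra K).zero_mem, ?_⟩
    simpa using hd.2.2.1 k hkm 0 0 (R0_subset_RK (R0Subalgebra K).zero_mem)
  · exact fun i _ => ⟨idealPow_Mx_subset_RK n (prod_mem_idealPow (hg i)),
      hd.apply_prod_eq_zero ha (hg i) hkn hkm⟩

end IsPDOrder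

lemma HasNBPD.closure_idealPow_ssubset {K : Set ℂ} {a : ℂ} {m : ℕ} [CompactSpace K] (ha : a ∈ K)
    (hm : 1 ≤ m) (hA : HasNBPD K a m) {k : ℕ} (hk : 1 ≤ k) (hkm : k ≤ m) :
    closure (idealPow (Mx K a) (k + 1)) ⊂ closure (idealPow (Mx K a) k) := by
  obtain ⟨d, hd, hcont, f, hf, hdf⟩ := hA
  have hcontOn {k : ℕ} (hkm : k ≤ m) : ContinuousOn (d k) (RK K) :=
    continuousOn_iff_continuous_domRestrict.2 (hcont k hkm)
  have hc : d 1 (zamMap K a 1) ≠ 0 := fun h => hdf <|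
    EqOn.of_subset_closure (fun g hg => hd.apply_one_eq_zero_of_mem_R0 ha hm h hg) (hcontOn hm)
      continuousOn_const R0_subset_RK subset_rfl hf
  have hvanish : EqOn (d k) 0 (closure (idealPow (Mx K a) (k + 1))) :=
    EqOn.of_subset_closure (fun g hg => hd.apply_eq_zero_of_mem_idealPow ha hg (by omega) hkm)
      ((hcontOn hkm).mono (closure_minimal (idealPow_Mx_subset_RK _) isClosed_RK))
      continuousOn_const subset_closure subset_rfl
  have hsub : idealPow (Mx K a) (k + 1) ⊆ idealPow (Mx K a) k :=
    idealPow_succ_subset (fun _ hf _ hg => Mx_mul_mem hf hg) hk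
  refine (ssubset_iff_of_subset (closure_mono hsub)).2
    ⟨zamMap K a k, subset_closure (zamMap_mem_idealPow_Mx k), fun h => pow_ne_zero k hc ?_⟩
  rw [← Fin.prod_const, ← hd.apply_prod_eq_prod ha (fun _ => zamMap_one_mem_Mx) hkm,
    Fin.prod_const, zamMap_one_pow]
  exact hvanish h

lemma exists_dual_eq_zero_of_notMem_closure {𝕜 E : Type*} [RCLike 𝕜] [NormedAddCommGroup E]
    [NormedSpace 𝕜 E] (S : Submodule 𝕜 E) {x : E} (hx : x ∉ closure (S : Set E)) :
    ∃ L : StrongDual 𝕜 E, (∀ y ∈ S, L y = 0) ∧ L x ≠ 0 := by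
  have : IsClosed (S.topologicalClosure : Set E) := S.isClosed_topologicalClosure
  obtain ⟨g, hg⟩ := SeparatingDual.exists_ne_zero (R := 𝕜) (x := S.topologicalClosure.mkQ x)
    (by rwa [ne_eq, Submodule.mkQ_apply, Submodule.Quotient.mk_eq_zero, ← SetLike.mem_coe,
      Submodule.topologicalClosure_coe])
  refine ⟨g.comp S.topologicalClosure.mkQL, fun y hy => ?_, hg⟩
  simp [(Submodule.Quotient.mk_eq_zero _).2 (S.le_topologicalClosure hy)]

section Dual

variable {K : Set ℂ} {a : ℂ} {m : ℕ}

lemma dual_zamMap_eq_zero {L : StrongDual ℂ C(K, ℂ)} (hL : ∀ f ∈ zamMulR0 K a (m + 1), L f = 0)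
    {i : ℕ} (hi : m < i) : L (zamMap K a i) = 0 := by
  obtain ⟨j, rfl⟩ := Nat.exists_eq_add_of_lt hi
  rw [add_right_comm, zamMap_add]
  exact hL _ (zamMap_mul_mem_zamMulR0 _ (zamMap_mem_R0 j))

variable [CompactSpace K]

/-- Gaussian elimination of `L((z - a)ⁱ)` for `i = m - 1, …, 0`: subtracting a multiple of
`f ↦ L((z - a)ᵐ⁻ⁱ f)` clears the `i`-th value without disturbing the higher ones, because `L`
kills all powers above `m`. -/
lemma exists_dual_zamMap_eq_ite
    (hC : zamMap K a m ∉ closure (zamMulR0 K a (m + 1) : Set C(K, ℂ))) :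
    ∃ L : StrongDual ℂ C(K, ℂ), (∀ f ∈ zamMulR0 K a (m + 1), L f = 0) ∧
      ∀ i, L (zamMap K a i) = if i = m then 1 else 0 := by
  suffices h : ∀ j ≤ m, ∃ L : StrongDual ℂ C(K, ℂ), (∀ f ∈ zamMulR0 K a (m + 1), L f = 0) ∧
      ∀ i, m - j ≤ i → L (zamMap K a i) = if i = m then 1 else 0 by
    simpa using h m le_rfl
  intro j hj
  induction j with
  | zero =>
    obtain ⟨L, hL, hLm⟩ := exists_dual_eq_zero_of_notMem_closure _ hC
    refine ⟨(L (zamMap K a m))⁻¹ • L, fun f hf => by simp [hL f hf], fun i hi => ?_⟩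
    rcases (Nat.sub_zero m ▸ hi).eq_or_lt with rfl | hi
    · simp [hLm]
    · simp [dual_zamMap_eq_zero hL hi, hi.ne']
  | succ j ih =>
    obtain ⟨L, hL, hLi⟩ := ih (by omega)
    refine ⟨L - L (zamMap K a (m - (j + 1))) •
      L.comp (ContinuousLinearMap.mul ℂ C(K, ℂ) (zamMap K a (j + 1))), fun f hf => ?_,
      fun i hi => ?_⟩
    · have hf' : zamMap K a (j + 1) * f ∈ zamMulR0 K a (m + 1) := by
        rw [mul_comm]; exact mul_R0_mem_zamMulR0 hf (zamMap_mem_R0 _)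
      simp [hL f hf, hL _ hf']
    · simp only [FunLike.coe_sub, FunLike.coe_smul, Pi.sub_apply,
        Pi.smul_apply, ContinuousLinearMap.comp_apply, ContinuousLinearMap.mul_apply', smul_eq_mul,
        ← zamMap_add]
      rcases (show i = m - (j + 1) ∨ m - j ≤ i by omega) with rfl | hi
      · rw [show j + 1 + (m - (j + 1)) = m by omega, hLi m (by omega), if_pos rfl,
          if_neg (by omega)]
        ring
      · rw [dual_zamMap_eq_zero hL (i := j + 1 + i) (by omega), hLi i hi]
        ring

end Dual

lemma exists_aeval_sub_mem_zamMulR0 {K : Set ℂ} {a : ℂ} (ha : a ∈ K) {f : C(K, ℂ)}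
    (hf : f ∈ R0 K) (n : ℕ) : ∃ c : ℂ[X], f - aeval (zamMap K a 1) c ∈ zamMulR0 K a n := by
  induction n with
  | zero => exact ⟨0, by simpa using R0_subset_zamMulR0_zero hf⟩
  | succ n ih =>
    obtain ⟨c, r, hr, hcr⟩ := ih
    obtain ⟨s, hs, hrs⟩ := exists_R0_eq_smul_one_add_zamMap_mul ha hr
    refine ⟨c + C (r ⟨a, ha⟩) * X ^ n, s, hs, ?_⟩
    rw [map_add, map_mul, aeval_C, map_pow, aeval_X, zamMap_one_pow, ← sub_sub, hcr,
      Algebra.algebraMap_eq_smul_one, zamMap_add]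
    linear_combination zamMap K a n * hrs

section PointDeriv

variable {K : Set ℂ} {a : ℂ} {m : ℕ}

def dualPointDeriv (K : Set ℂ) (a : ℂ) (m : ℕ) (L : StrongDual ℂ C(K, ℂ)) :
    ℕ → C(K, ℂ) → ℂ :=
  fun k f => L (zamMap K a (m - k) * f)

variable {L : StrongDual ℂ C(K, ℂ)}

lemma continuous_dualPointDeriv [CompactSpace K] (k : ℕ) :
    Continuous (dualPointDeriv K a m L k) :=
  L.continuous.comp (continuous_const_mul _)

variable (hL1 : ∀ i, L (zamMap K a i) = if i = m then 1 else 0)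
include hL1

lemma dual_aeval_zamMap (c : ℂ[X]) : L (aeval (zamMap K a 1) c) = c.coeff m := by
  induction c using Polynomial.induction_on' with
  | add p q hp hq => simp [hp, hq]
  | monomial n x =>
    rw [aeval_monomial, ← Algebra.smul_def, map_smul, zamMap_one_pow, hL1, coeff_monomial]
    split_ifs <;> simp

variable (hL0 : ∀ f ∈ zamMulR0 K a (m + 1), L f = 0)
include hL0

lemma dualPointDeriv_eq_coeff {f : C(K, ℂ)} {c : ℂ[X]}
    (hfc : f - aeval (zamMap K a 1) c ∈ zamMulR0 K a (m + 1)) {k : ℕ} (hk : k ≤ m) :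
    dualPointDeriv K a m L k f = c.coeff k := by
  have hsplit : zamMap K a (m - k) * f = aeval (zamMap K a 1) (X ^ (m - k) * c)
      + zamMap K a (m - k) * (f - aeval (zamMap K a 1) c) := by
    rw [map_mul, map_pow, aeval_X, zamMap_one_pow]
    ring
  have hrem : zamMap K a (m - k) * (f - aeval (zamMap K a 1) c) ∈ zamMulR0 K a (m + 1) := by
    rw [mul_comm]
    exact mul_R0_mem_zamMulR0 hfc (zamMap_mem_R0 _)
  rw [dualPointDeriv, hsplit, map_add, dual_aeval_zamMap hL1, hL0 _ hrem, add_zero,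
    coeff_X_pow_mul', if_pos (Nat.sub_le m k), Nat.sub_sub_self hk]

lemma dualPointDeriv_zero_of_mem_R0 (ha : a ∈ K) {f : C(K, ℂ)} (hf : f ∈ R0 K) :
    dualPointDeriv K a m L 0 f = f ⟨a, ha⟩ := by
  obtain ⟨s, hs, hfs⟩ := exists_R0_eq_smul_one_add_zamMap_mul ha hf
  rw [dualPointDeriv, Nat.sub_zero, hfs, mul_add, mul_smul_comm, mul_one, ← mul_assoc,
    ← zamMap_add, map_add, map_smul, hL1, if_pos rfl, hL0 _ (zamMap_mul_mem_zamMulR0 _ hs)]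
  simp

lemma dualPointDeriv_mul_of_mem_R0 (ha : a ∈ K) {k : ℕ} (hk : k ≤ m) {f g : C(K, ℂ)}
    (hf : f ∈ R0 K) (hg : g ∈ R0 K) :
    dualPointDeriv K a m L k (f * g) = ∑ j ∈ Finset.range (k + 1),
      dualPointDeriv K a m L j f * dualPointDeriv K a m L (k - j) g := by
  obtain ⟨c, hc⟩ := exists_aeval_sub_mem_zamMulR0 ha hf (m + 1)
  obtain ⟨c', hc'⟩ := exists_aeval_sub_mem_zamMulR0 ha hg (m + 1)
  have hfg : f * g - aeval (zamMap K a 1) (c * c') ∈ zamMulR0 K a (m + 1) := by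
    have hsplit : f * g - aeval (zamMap K a 1) (c * c') = (f - aeval (zamMap K a 1) c) * g
        + (g - aeval (zamMap K a 1) c') * aeval (zamMap K a 1) c := by
      rw [map_mul]; ring
    rw [hsplit]
    exact add_mem (mul_R0_mem_zamMulR0 hc hg) (mul_R0_mem_zamMulR0 hc' (aeval_zamMap_mem_R0 c))
  rw [dualPointDeriv_eq_coeff hL1 hL0 hfg hk, coeff_mul,
    Finset.Nat.sum_antidiagonal_eq_sum_range_succ fun i j => c.coeff i * c'.coeff j]
  refine Finset.sum_congr rfl fun j hj => ?_
  have hjk : j ≤ k := Nat.lt_succ_iff.1 (Finset.mem_range.1 hj)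
  rw [dualPointDeriv_eq_coeff hL1 hL0 hc (hjk.trans hk),
    dualPointDeriv_eq_coeff hL1 hL0 hc' ((Nat.sub_le k j).trans hk)]

end PointDeriv

lemma hasNBPD_of_zamMap_notMem_closure {K : Set ℂ} {a : ℂ} {m : ℕ} [CompactSpace K] (ha : a ∈ K)
    (hm : 1 ≤ m) (hC : zamMap K a m ∉ closure (zamMulR0 K a (m + 1) : Set C(K, ℂ))) :
    HasNBPD K a m := by
  obtain ⟨L, hL0, hL1⟩ := exists_dual_zamMap_eq_ite hC
  have hcont := continuous_dualPointDeriv (K := K) (a := a) (m := m) (L := L)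
  refine ⟨dualPointDeriv K a m L, ⟨fun f hf _ => ?_, fun k _ f _ g _ => ?_,
    fun k _ c f _ => ?_, fun k _ hkm f hf g hg => ?_⟩,
    fun k _ => (hcont k).comp continuous_subtype_val, zamMap K a 1, zamMap_mem_RK 1, ?_⟩
  · exact EqOn.closure (fun g hg => dualPointDeriv_zero_of_mem_R0 hL1 hL0 ha hg) (hcont 0)
      (continuous_eval_const _) hf
  · simp [dualPointDeriv, mul_add]
  · simp [dualPointDeriv]
  · refine eqOn_closure₂ (fun f hf g hg => dualPointDeriv_mul_of_mem_R0 hL1 hL0 ha hkm hf hg)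
      ?_ ?_ f hf g hg
    · exact (hcont k).comp continuous_mul
    · exact continuous_finsetSum _ fun j _ =>
        ((hcont j).comp continuous_fst).mul ((hcont (k - j)).comp continuous_snd)
  · rw [dualPointDeriv, ← zamMap_add, Nat.sub_add_cancel hm, hL1, if_pos rfl]
    exact one_ne_zero

theorem derivations_vs_ideals_RK_general (K : Set ℂ) (hK : IsCompact K)
    (a : ℂ) (ha : a ∈ K) (m : ℕ) (hm : 1 ≤ m) :
    (HasNBPD K a m ↔
      ∀ k : ℕ, 1 ≤ k → k ≤ m →
        closure (idealPow (Mx K a) (k + 1)) ⊂ closure (idealPow (Mx K a) k)) ∧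
    (HasNBPD K a m ↔
      zamMap K a m ∉ closure {h : C(K, ℂ) | ∃ g ∈ R0 K, h = zamMap K a (m + 1) * g}) := by
  have : CompactSpace K := isCompact_iff_compactSpace.mp hK
  have hAB (hA : HasNBPD K a m) (k : ℕ) (hk : 1 ≤ k) (hkm : k ≤ m) :=
    hA.closure_idealPow_ssubset ha hm hk hkm
  have hBC (hB : ∀ k : ℕ, 1 ≤ k → k ≤ m →
      closure (idealPow (Mx K a) (k + 1)) ⊂ closure (idealPow (Mx K a) k)) :=
    zamMap_notMem_closure_zamMulR0 ha (hB m hm le_rfl)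
  have hCA := hasNBPD_of_zamMap_notMem_closure ha hm
  exact ⟨⟨hAB, hCA ∘ hBC⟩, ⟨hBC ∘ hAB, hCA⟩⟩

/-- Corollary 2.7: equivalence of nondegenerate bounded point derivations of order `m`,
the strictly decreasing chain of closed powers of `M_a`, and
`(z−a)^m ∉ cl((z−a)^{m+1} R₀(K))`. -/
theorem derivations_vs_ideals_RK (K : Set ℂ) (hne : K.Nonempty) (hK : IsCompact K)
    (a : ℂ) (ha : a ∈ K) (m : ℕ) (hm : 1 ≤ m) :
    (HasNBPD K a m ↔
      ∀ k : ℕ, 1 ≤ k → k ≤ m →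
        closure (idealPow (Mx K a) (k + 1)) ⊂ closure (idealPow (Mx K a) k)) ∧
    (HasNBPD K a m ↔
      zamMap K a m ∉ closure {h : C(K, ℂ) | ∃ g ∈ R0 K, h = zamMap K a (m + 1) * g}) :=
  derivations_vs_ideals_RK_general K hK a ha m hm

end
end
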